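/- Let M be a metric space with base point 0 that is either unbounded or not uniformly discrete. Then Lip_0(M) contains a Daugavet-point, i.e., there exists f ∈ S_{Lip_0(M)} that is a Daugavet-point of the Banach space Lip_0(M). -/

import Mathlib

open Metric Set Filter NNReal

noncomputable section

namespace DeltaPaper

/-- The topological dual of a normed space (the former Mathlib `NormedSpace.Dual`). -/
abbrev NormedSpace.Dual (𝕜 : Type*) (E : Type*) [NontriviallyNormedField 𝕜]
    [SeminormedAddCommGroup E] [NormedSpace 𝕜 E] : Type _ :=
  E →L[𝕜] 𝕜

/-! ### Generic Banach space notions -/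

variable {X : Type*} [NormedAddCommGroup X] [NormedSpace ℝ X]

/-- `x` is a Daugavet-point: every slice of the unit ball contains, for every `ε > 0`,
an element at distance at least `2 - ε` from `x`. -/
def IsDaugavetPoint (x : X) : Prop :=
  ∀ (φ : NormedSpace.Dual ℝ X) (α : ℝ), ‖φ‖ = 1 → 0 < α → ∀ ε > 0,
    ∃ y : X, ‖y‖ ≤ 1 ∧ 1 - α < φ y ∧ 2 - ε ≤ ‖x - y‖

/-- `x` is a Δ-point: every slice of the unit ball containing `x` contains, for every
`ε > 0`, an element at distance at least `2 - ε` from `x`. -/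
def IsDeltaPoint (x : X) : Prop :=
  ∀ (φ : NormedSpace.Dual ℝ X) (α : ℝ), ‖φ‖ = 1 → 0 < α → 1 - α < φ x → ∀ ε > 0,
    ∃ y : X, ‖y‖ ≤ 1 ∧ 1 - α < φ y ∧ 2 - ε ≤ ‖x - y‖

/-- `x*` is a w*-Daugavet-point of the dual of `X`. -/
def IsWeakStarDaugavetPoint (f : NormedSpace.Dual ℝ X) : Prop :=
  ∀ (x : X) (α : ℝ), ‖x‖ = 1 → 0 < α → ∀ ε > 0,
    ∃ g : NormedSpace.Dual ℝ X, ‖g‖ ≤ 1 ∧ 1 - α < g x ∧ 2 - ε ≤ ‖f - g‖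

/-- `x*` is a w*-Δ-point of the dual of `X`. -/
def IsWeakStarDeltaPoint (f : NormedSpace.Dual ℝ X) : Prop :=
  ∀ (x : X) (α : ℝ), ‖x‖ = 1 → 0 < α → 1 - α < f x → ∀ ε > 0,
    ∃ g : NormedSpace.Dual ℝ X, ‖g‖ ≤ 1 ∧ 1 - α < g x ∧ 2 - ε ≤ ‖f - g‖

/-- `x` is a denting point of the unit ball: it lies in slices of the unit ball of
arbitrarily small diameter. -/
def IsDentingPoint (x : X) : Prop :=
  ‖x‖ ≤ 1 ∧ ∀ ε > 0, ∃ (φ : NormedSpace.Dual ℝ X) (α : ℝ), ‖φ‖ = 1 ∧ 0 < α ∧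
    1 - α < φ x ∧ Metric.diam {y : X | ‖y‖ ≤ 1 ∧ 1 - α < φ y} < ε

/-- The Kuratowski measure of non-compactness of a set: the infimum of all `ε > 0`
such that the set can be covered by finitely many sets of diameter less than `ε`. -/
def kuratowski {Y : Type*} [PseudoMetricSpace Y] (A : Set Y) : ℝ :=
  sInf {ε : ℝ | 0 < ε ∧ ∃ 𝒞 : Finset (Set Y), (A ⊆ ⋃ B ∈ 𝒞, B) ∧ ∀ B ∈ 𝒞, Metric.diam B < ε}

/-! ### The space of Lipschitz functions vanishing at a base point -/

variable {M : Type*} [PseudoMetricSpace M]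

/-- The least Lipschitz constant of a function. -/
def lipConst (f : M → ℝ) : ℝ≥0 := sInf {K | LipschitzWith K f}

theorem lipschitzWith_lipConst {f : M → ℝ} (hf : ∃ K, LipschitzWith K f) :
    LipschitzWith (lipConst f) f := by
  obtain ⟨K₀, hK₀⟩ := hf
  rw [lipschitzWith_iff_dist_le_mul]
  intro x y
  rcases le_or_gt (dist x y) 0 with h | h
  · have h0 : dist x y = 0 := le_antisymm h dist_nonneg
    have := hK₀.dist_le_mul x y
    rw [h0, mul_zero] at this ⊢
    exact this
  · rw [← div_le_iff₀ h]
    have hnn : 0 ≤ dist (f x) (f y) / dist x y := by positivity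
    rw [← Real.coe_toNNReal _ hnn, NNReal.coe_le_coe]
    refine le_csInf ⟨K₀, hK₀⟩ ?_
    intro K hK
    rw [← NNReal.coe_le_coe, Real.coe_toNNReal _ hnn, div_le_iff₀ h]
    exact hK.dist_le_mul x y

theorem lipConst_le {f : M → ℝ} {K : ℝ≥0} (hK : LipschitzWith K f) : lipConst f ≤ K :=
  csInf_le (OrderBot.bddBelow _) hK

theorem lipschitzWith_smul {f : M → ℝ} {K : ℝ≥0} (hK : LipschitzWith K f) (c : ℝ) :
    LipschitzWith (‖c‖₊ * K) (c • f) := by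
  rw [lipschitzWith_iff_dist_le_mul] at *
  intro x y
  have : dist ((c • f) x) ((c • f) y) = ‖c‖ * dist (f x) (f y) := by
    simp only [Pi.smul_apply, smul_eq_mul, Real.dist_eq, ← mul_sub, abs_mul, Real.norm_eq_abs]
  rw [this, NNReal.coe_mul, coe_nnnorm, mul_assoc]
  exact mul_le_mul_of_nonneg_left (hK x y) (norm_nonneg c)

variable (M) in
/-- The submodule of `M → ℝ` consisting of Lipschitz functions vanishing at the
base point `z`. -/
def Lip0 (z : M) : Submodule ℝ (M → ℝ) where
  carrier := {f | (∃ K, LipschitzWith K f) ∧ f z = 0}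
  add_mem' := by
    rintro f g ⟨⟨K, hK⟩, hf0⟩ ⟨⟨L, hL⟩, hg0⟩
    exact ⟨⟨K + L, hK.add hL⟩, by simp [hf0, hg0]⟩
  zero_mem' := ⟨⟨0, LipschitzWith.const' 0⟩, rfl⟩
  smul_mem' := by
    rintro c f ⟨⟨K, hK⟩, hf0⟩
    exact ⟨⟨‖c‖₊ * K, lipschitzWith_smul hK c⟩, by simp [hf0]⟩

variable {z : M}

instance : NormedAddCommGroup ↥(Lip0 M z) :=
  AddGroupNorm.toNormedAddCommGroup
    { toFun := fun f => ((lipConst (f : M → ℝ) : ℝ≥0) : ℝ)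
      map_zero' := by
        have h0 : lipConst (0 : M → ℝ) = 0 :=
          le_antisymm (lipConst_le (by simpa using LipschitzWith.const' (0 : ℝ))) bot_le
        show ((lipConst ((0 : ↥(Lip0 M z)) : M → ℝ) : ℝ≥0) : ℝ) = 0
        rw [show ((0 : ↥(Lip0 M z)) : M → ℝ) = 0 from rfl, h0, NNReal.coe_zero]
      add_le' := by
        intro f g
        have hf := lipschitzWith_lipConst f.2.1
        have hg := lipschitzWith_lipConst g.2.1
        have : lipConst ((f + g : ↥(Lip0 M z)) : M → ℝ) ≤
            lipConst (f : M → ℝ) + lipConst (g : M → ℝ) := by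
          refine lipConst_le ?_
          have := hf.add hg
          exact this
        exact_mod_cast this
      neg' := by
        intro f
        show ((lipConst ((-f : ↥(Lip0 M z)) : M → ℝ) : ℝ≥0) : ℝ) = _
        rw [show ((-f : ↥(Lip0 M z)) : M → ℝ) = -(f : M → ℝ) from rfl]
        unfold lipConst
        congr 2
        ext K
        exact ⟨fun hK => by simpa using hK.neg, fun hK => hK.neg⟩
      eq_zero_of_map_eq_zero' := by
        intro f hf
        replace hf : ((lipConst (f : M → ℝ) : ℝ≥0) : ℝ) = 0 := hf
        have h0 : lipConst (f : M → ℝ) = 0 := by exact_mod_cast hf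
        have hl : LipschitzWith 0 (f : M → ℝ) := h0 ▸ lipschitzWith_lipConst f.2.1
        ext x
        have := hl.dist_le_mul x z
        simp only [NNReal.coe_zero, zero_mul] at this
        have hxz : (f : M → ℝ) x = (f : M → ℝ) z :=
          dist_le_zero.mp this
        simpa [f.2.2] using hxz }

theorem Lip0.norm_def (f : ↥(Lip0 M z)) : ‖f‖ = ((lipConst (f : M → ℝ) : ℝ≥0) : ℝ) := rfl

theorem Lip0.lipschitzWith (f : ↥(Lip0 M z)) : LipschitzWith (lipConst (f : M → ℝ)) (f : M → ℝ) :=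
  lipschitzWith_lipConst f.2.1

instance : NormedSpace ℝ ↥(Lip0 M z) where
  norm_smul_le c f := by
    have : lipConst ((c • f : ↥(Lip0 M z)) : M → ℝ) ≤ ‖c‖₊ * lipConst (f : M → ℝ) :=
      lipConst_le (lipschitzWith_smul (Lip0.lipschitzWith f) c)
    calc ‖c • f‖ = ((lipConst ((c • f : ↥(Lip0 M z)) : M → ℝ) : ℝ≥0) : ℝ) := rfl
      _ ≤ ((‖c‖₊ * lipConst (f : M → ℝ) : ℝ≥0) : ℝ) := by exact_mod_cast this
      _ = ‖c‖ * ‖f‖ := by push_cast [Lip0.norm_def]; rfl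

variable (M z) in
/-- The evaluation functional `δ_x ∈ Lip₀(M)*`. -/
def evalδ (x : M) : NormedSpace.Dual ℝ ↥(Lip0 M z) :=
  LinearMap.mkContinuous
    { toFun := fun f => (f : M → ℝ) x
      map_add' := fun f g => rfl
      map_smul' := fun c f => rfl }
    (dist x z)
    (by
      intro f
      have := (Lip0.lipschitzWith f).dist_le_mul x z
      simp only [f.2.2, Real.dist_eq, sub_zero] at this
      calc ‖(f : M → ℝ) x‖ = |(f : M → ℝ) x - 0| := by simp
        _ ≤ (lipConst (f : M → ℝ) : ℝ) * dist x z := by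
            simpa [f.2.2, Real.dist_eq] using (Lip0.lipschitzWith f).dist_le_mul x z
        _ = dist x z * ‖f‖ := by rw [Lip0.norm_def, mul_comm])

variable (M z) in
/-- The Lipschitz-free space over `M`: the closed linear span of the evaluation
functionals inside `Lip₀(M)*`. -/
def FreeSpace : Submodule ℝ (NormedSpace.Dual ℝ ↥(Lip0 M z)) :=
  (Submodule.span ℝ (Set.range (evalδ M z))).topologicalClosure

variable (M z) in
/-- The molecule `m_{x y} = (δ_x - δ_y)/d(x,y)` as an element of `Lip₀(M)*`. -/
def molecule (x y : M) : NormedSpace.Dual ℝ ↥(Lip0 M z) :=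
  (dist x y)⁻¹ • (evalδ M z x - evalδ M z y)

theorem molecule_mem_freeSpace (x y : M) : molecule M z x y ∈ FreeSpace M z :=
  Submodule.le_topologicalClosure _
    (Submodule.smul_mem _ _ (Submodule.sub_mem _
      (Submodule.subset_span ⟨x, rfl⟩) (Submodule.subset_span ⟨y, rfl⟩)))

variable (M z) in
/-- The molecule `m_{x y}` as an element of the free space `F(M)`. -/
def mol (x y : M) : ↥(FreeSpace M z) := ⟨molecule M z x y, molecule_mem_freeSpace x y⟩

variable (M) in
/-- A metric space is uniformly discrete if distances between distinct points are
bounded below by a positive constant. -/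
def UniformlyDiscrete : Prop := ∃ θ > (0:ℝ), ∀ x y : M, x ≠ y → θ ≤ dist x y

/-- A norm-one Lipschitz function is local if its Lipschitz constant is approximated
on pairs of arbitrarily close points. -/
def IsLocal (f : ↥(Lip0 M z)) : Prop :=
  ∀ ε > 0, ∃ u v : M, u ≠ v ∧
    ‖f‖ - ε < ((f : M → ℝ) u - (f : M → ℝ) v) / dist u v ∧ dist u v < ε

/-- `f ∈ S_{Lip₀(M)}` is a w*-Daugavet-point: for every w*-slice `S(μ, α)` of
`B_{Lip₀(M)}` (`μ` a norm-one element of `F(M)`) and every `ε > 0` there is `g` in the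
slice with `‖f - g‖ ≥ 2 - ε`. -/
def IsLipWeakStarDaugavetPoint (f : ↥(Lip0 M z)) : Prop :=
  ∀ μ : NormedSpace.Dual ℝ ↥(Lip0 M z), μ ∈ FreeSpace M z → ‖μ‖ = 1 → ∀ α > (0:ℝ), ∀ ε > (0:ℝ),
    ∃ g : ↥(Lip0 M z), ‖g‖ ≤ 1 ∧ 1 - α < μ g ∧ 2 - ε ≤ ‖f - g‖

/-- `f ∈ S_{Lip₀(M)}` is a w*-Δ-point: the same as above, but only for w*-slices
containing `f`. -/
def IsLipWeakStarDeltaPoint (f : ↥(Lip0 M z)) : Prop :=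
  ∀ μ : NormedSpace.Dual ℝ ↥(Lip0 M z), μ ∈ FreeSpace M z → ‖μ‖ = 1 → ∀ α > (0:ℝ),
    1 - α < μ f → ∀ ε > (0:ℝ),
    ∃ g : ↥(Lip0 M z), ‖g‖ ≤ 1 ∧ 1 - α < μ g ∧ 2 - ε ≤ ‖f - g‖

end DeltaPaper

open DeltaPaper

/-!
Write the candidate `f` as `F - F 0` for a 1-Lipschitz `F`. Given a slice `S(φ, α)`, take `g₀`
deep inside it and `g = (1 - l) g₀ - l f`: it is still in the slice, and `‖g + l f‖ ≤ 1 - l`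
leaves room to modify it. Suppose that for such `g` there are functions
`h_k = min g (d(·, p_k) - a_k)` in the unit ball, with `‖f - h_k‖ ≥ 2 - ε`, each differing from `g`
only on its own set, these sets being pairwise disjoint. Then every signed sum `∑ ±(h_k - g)`
over `k < K` has norm at most `4`, so `|φ (h_k - g)| ≤ 4 / K` for some `k`, and this `h_k` lies
in the slice.

Such perturbations exist for `F = d(·, 0)` when `M` is unbounded (the `p_k` escape to infinity
geometrically fast), for `F = d(·, c)` when `c` is a point of the completion approached by
points of `M` (the `p_k` converge to `c` geometrically fast), and for `F = d(·, S)` when `S` is a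
uniformly separated sequence whose points have arbitrarily close neighbours. If `M` is not
uniformly discrete, pick pairs of distinct points at distances tending to `0`: their first
coordinates either form a totally bounded set, which gives the second situation, or contain a
uniformly separated subsequence, which gives the third.
-/

namespace DeltaPaper

open Function Topology
open UniformSpace (Completion)

theorem exists_mem_forall_ne_apply_eq_zero {ι α β : Type*} [Zero β] {s : Finset ι}
    (hs : s.Nonempty) {e : ι → α → β}
    (hd : (s : Set ι).Pairwise (Disjoint on fun i => support (e i))) (x : α) :
    ∃ i ∈ s, ∀ j ∈ s, j ≠ i → e j x = 0 := by
  by_cases h : ∃ i ∈ s, e i x ≠ 0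
  · obtain ⟨i, hi, hx⟩ := h
    exact ⟨i, hi, fun j hj hji => by_contra fun hxj => Set.disjoint_left.1 (hd hj hi hji) hxj hx⟩
  · obtain ⟨i, hi⟩ := hs
    exact ⟨i, hi, fun j hj _ => not_not.1 fun hj' => h ⟨j, hj, hj'⟩⟩

theorem exists_norm_le_one_lt_apply {X : Type*} [NormedAddCommGroup X] [NormedSpace ℝ X]
    (φ : NormedSpace.Dual ℝ X) {r : ℝ} (hr : r < ‖φ‖) : ∃ x : X, ‖x‖ ≤ 1 ∧ r < φ x := by
  obtain ⟨x, hx, hφx⟩ := φ.exists_lt_apply_of_lt_opNorm hr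
  rcases lt_abs.1 hφx with h | h
  · exact ⟨x, hx.le, h⟩
  · exact ⟨-x, by simpa using hx.le, by simpa using h⟩

theorem norm_le_one_of_norm_add_smul_le {X : Type*} [SeminormedAddCommGroup X]
    [NormedSpace ℝ X] {f g : X} {l : ℝ} (hl : 0 ≤ l) (hf : ‖f‖ ≤ 1) (hg : ‖g + l • f‖ ≤ 1 - l) :
    ‖g‖ ≤ 1 := by
  calc ‖g‖ = ‖(g + l • f) - l • f‖ := by rw [add_sub_cancel_right]
    _ ≤ ‖g + l • f‖ + ‖l • f‖ := norm_sub_le _ _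
    _ ≤ (1 - l) + l := by
      rw [norm_smul, Real.norm_of_nonneg hl]
      gcongr
      exact mul_le_of_le_one_right hl hf
    _ = 1 := by ring

theorem exists_seq_forall_lt_mul_of_forall_exists_gt {α : Type*} {F : α → ℝ}
    (hF : ∀ r, ∃ x, r < F x) {ρ : ℝ} (hρ : 0 < ρ) :
    ∃ u : ℕ → α, (∀ k, 0 < F (u k)) ∧ ∀ a b, a < b → F (u a) < ρ * F (u b) := by
  choose pick hpick using hF
  set u : ℕ → α := fun k => Nat.rec (pick 0) (fun _ x => pick (F x / min ρ 1)) k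
  have hρ' : 0 < min ρ 1 := lt_min hρ one_pos
  have hstep : ∀ k, F (u k) < min ρ 1 * F (u (k + 1)) := fun k =>
    (div_lt_iff₀' hρ').1 (hpick _)
  have hpos : ∀ k, 0 < F (u k) := fun k => Nat.rec (hpick 0) (fun k ih =>
    pos_of_mul_pos_right (ih.trans (hstep k)) hρ'.le) k
  have hmono : StrictMono (F ∘ u) := strictMono_nat_of_lt_succ fun k =>
    (hstep k).trans_le (mul_le_of_le_one_left (hpos (k + 1)).le (min_le_right _ _))
  refine ⟨u, hpos, fun a b hab => ?_⟩
  calc F (u a) < min ρ 1 * F (u (a + 1)) := hstep a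
    _ ≤ ρ * F (u b) := mul_le_mul (min_le_left _ _) (hmono.monotone hab) (hpos (a + 1)).le hρ.le

theorem exists_seq_forall_lt_mul_of_forall_exists_pos_lt {α : Type*} {F : α → ℝ}
    (hF : ∀ θ > 0, ∃ x, 0 < F x ∧ F x < θ) {θ₀ ρ : ℝ} (hθ₀ : 0 < θ₀) (hρ : 0 < ρ) :
    ∃ p : ℕ → α, (∀ k, 0 < F (p k) ∧ F (p k) < θ₀) ∧ ∀ a b, a < b → F (p b) < ρ * F (p a) := by
  have hF' : ∀ θ, ∃ x, 0 < θ → 0 < F x ∧ F x < θ := fun θ => by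
    by_cases hθ : 0 < θ
    · exact (hF θ hθ).imp fun _ h _ => h
    · exact ⟨(hF 1 one_pos).choose, fun h => (hθ h).elim⟩
  choose pick hpick using hF'
  set p : ℕ → α := fun k => Nat.rec (pick θ₀) (fun _ x => pick (min ρ 1 * F x)) k
  have hρ' : 0 < min ρ 1 := lt_min hρ one_pos
  have hstep : ∀ k, 0 < F (p k) → 0 < F (p (k + 1)) ∧ F (p (k + 1)) < min ρ 1 * F (p k) :=
    fun k hk => hpick _ (mul_pos hρ' hk)
  have hpos : ∀ k, 0 < F (p k) := fun k => Nat.rec (hpick θ₀ hθ₀).1 (fun k ih => (hstep k ih).1) k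
  have hanti : StrictAnti (F ∘ p) := strictAnti_nat_of_succ_lt fun k =>
    (hstep k (hpos k)).2.trans_le (mul_le_of_le_one_left (hpos k).le (min_le_right _ _))
  refine ⟨p, fun k => ⟨hpos k, (hanti.antitone k.zero_le).trans_lt (hpick θ₀ hθ₀).2⟩,
    fun a b hab => ?_⟩
  calc F (p b) ≤ F (p (a + 1)) := hanti.antitone hab
    _ < min ρ 1 * F (p a) := (hstep a (hpos a)).2
    _ ≤ ρ * F (p a) := mul_le_mul_of_nonneg_right (min_le_left _ _) (hpos a).le

theorem exists_separated_subseq {M : Type*} [PseudoMetricSpace M] {a : ℕ → M}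
    (ha : ¬ TotallyBounded (range a)) (z : M) :
    ∃ σ > 0, ∃ φ : ℕ → ℕ, Tendsto φ atTop atTop ∧
      (Pairwise fun m n => σ ≤ dist (a (φ m)) (a (φ n))) ∧ ∀ n, σ ≤ dist (a (φ n)) z := by
  obtain ⟨σ, hσ, hcov⟩ : ∃ σ > 0, ∀ t : Set M, t.Finite → ¬ range a ⊆ ⋃ y ∈ t, ball y σ := by
    simpa [Metric.totallyBounded_iff] using ha
  have hnext : ∀ s : Finset ℕ, ∃ j, σ ≤ dist (a j) z ∧ ∀ i ∈ s, σ ≤ dist (a i) (a j) := by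
    intro s
    obtain ⟨-, ⟨j, rfl⟩, hj⟩ := not_subset.1 (hcov _ ((s.finite_toSet.image a).insert z))
    simp only [mem_iUnion, mem_ball, not_exists, not_lt] at hj
    refine ⟨j, hj z (mem_insert _ _), fun i hi => ?_⟩
    rw [dist_comm]
    exact hj _ (mem_insert_of_mem _ (mem_image_of_mem a hi))
  have : Std.Symm fun i j => σ ≤ dist (a i) (a j) := ⟨fun i j h => by rwa [dist_comm]⟩
  obtain ⟨φ, hφz, hsep⟩ := exists_seq_of_forall_finset_exists' (fun j => σ ≤ dist (a j) z)
    (fun i j => σ ≤ dist (a i) (a j)) fun s _ => hnext s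
  have hinj : Injective φ := fun m n h => by_contra fun hmn => by
    have : σ ≤ dist (a (φ m)) (a (φ n)) := hsep hmn
    rw [h, dist_self] at this
    exact this.not_gt hσ
  exact ⟨σ, hσ, φ, hinj.nat_tendsto_atTop, hsep, hφz⟩

section PseudoMetric

variable {M : Type*} [PseudoMetricSpace M] {z : M}

namespace Lip0

@[simp]
theorem coe_apply_base (f : ↥(Lip0 M z)) : (f : M → ℝ) z = 0 :=
  f.2.2

theorem sub_le_of_norm_le {f : ↥(Lip0 M z)} {c : ℝ} (hf : ‖f‖ ≤ c) (x y : M) :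
    (f : M → ℝ) x - (f : M → ℝ) y ≤ c * dist x y := by
  refine (le_abs_self _).trans ?_
  rw [← Real.dist_eq]
  exact ((Lip0.lipschitzWith f).dist_le_mul x y).trans
    (mul_le_mul_of_nonneg_right hf dist_nonneg)

theorem sub_le_of_norm_add_smul_le {g f : ↥(Lip0 M z)} {l c : ℝ} (h : ‖g + l • f‖ ≤ c)
    (x y : M) :
    (g : M → ℝ) x - (g : M → ℝ) y ≤ c * dist x y - l * ((f : M → ℝ) x - (f : M → ℝ) y) := by
  have := sub_le_of_norm_le h x y
  simp only [Submodule.coe_add, Submodule.coe_smul, Pi.add_apply, Pi.smul_apply,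
    smul_eq_mul] at this
  linarith

theorem norm_le_of_lipschitzWith {f : ↥(Lip0 M z)} {K : ℝ≥0}
    (hf : LipschitzWith K (f : M → ℝ)) : ‖f‖ ≤ K :=
  NNReal.coe_le_coe.2 (lipConst_le hf)

theorem norm_le_of_forall_sub_le {f : ↥(Lip0 M z)} {C : ℝ} (hC : 0 ≤ C)
    (h : ∀ x y, (f : M → ℝ) x - (f : M → ℝ) y ≤ C * dist x y) : ‖f‖ ≤ C := by
  have hf : LipschitzWith C.toNNReal (f : M → ℝ) := LipschitzWith.of_dist_le_mul fun x y => by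
    rw [Real.dist_eq, Real.coe_toNNReal _ hC, abs_le]
    have hyx := h y x
    rw [dist_comm] at hyx
    constructor <;> linarith [h x y]
  simpa [hC] using norm_le_of_lipschitzWith hf

variable (z) in
def ofLipschitzWith (F : M → ℝ) {K : ℝ≥0} (hF : LipschitzWith K F) : ↥(Lip0 M z) :=
  ⟨fun x => F x - F z, ⟨K, by simpa using hF.sub (LipschitzWith.const (F z))⟩, sub_self _⟩

theorem norm_ofLipschitzWith_le (F : M → ℝ) {K : ℝ≥0} (hF : LipschitzWith K F) :
    ‖ofLipschitzWith z F hF‖ ≤ K := by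
  have h : LipschitzWith K fun x => F x - F z := by
    simpa using hF.sub (LipschitzWith.const (F z))
  exact norm_le_of_lipschitzWith h

def minDistSub (g : ↥(Lip0 M z)) (p : M) (a : ℝ) (ha : a ≤ dist z p) : ↥(Lip0 M z) :=
  ⟨fun x => min ((g : M → ℝ) x) (dist x p - a),
    ⟨_, (Lip0.lipschitzWith g).min ((LipschitzWith.dist_left p).sub (LipschitzWith.const a))⟩,
    by simpa [g.2.2] using ha⟩

@[simp]
theorem minDistSub_apply (g : ↥(Lip0 M z)) (p : M) (a : ℝ) (ha : a ≤ dist z p) (x : M) :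
    (minDistSub g p a ha : M → ℝ) x = min ((g : M → ℝ) x) (dist x p - a) :=
  rfl

theorem norm_minDistSub_le {g : ↥(Lip0 M z)} (hg : ‖g‖ ≤ 1) (p : M) (a : ℝ)
    (ha : a ≤ dist z p) : ‖minDistSub g p a ha‖ ≤ 1 := by
  have hg' : lipConst (g : M → ℝ) ≤ 1 := by exact_mod_cast hg
  simpa [hg'] using norm_le_of_lipschitzWith (f := minDistSub g p a ha)
    ((Lip0.lipschitzWith g).min ((LipschitzWith.dist_left p).sub (LipschitzWith.const a)))

theorem support_minDistSub_sub_subset (g : ↥(Lip0 M z)) (p : M) (a : ℝ) (ha : a ≤ dist z p) :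
    support ((minDistSub g p a ha - g : ↥(Lip0 M z)) : M → ℝ) ⊆
      {x | dist x p - a < (g : M → ℝ) x} := by
  intro x hx
  by_contra hle
  rw [mem_ofPred_eq, not_lt] at hle
  exact hx (by simp [min_eq_left hle])

theorem le_sub_minDistSub_apply_sub (f g : ↥(Lip0 M z)) {p q : M} {a : ℝ} (ha : a ≤ dist z p)
    (hq : (g : M → ℝ) q ≤ dist q p - a) :
    (f : M → ℝ) p - (f : M → ℝ) q + a + (g : M → ℝ) q ≤
      ((f - minDistSub g p a ha : ↥(Lip0 M z)) : M → ℝ) p -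
        ((f - minDistSub g p a ha : ↥(Lip0 M z)) : M → ℝ) q := by
  have hp : min ((g : M → ℝ) p) (dist p p - a) ≤ -a := by simp
  have hq' : (g : M → ℝ) q ≤ min ((g : M → ℝ) q) (dist q p - a) := le_min le_rfl hq
  simp only [Submodule.coe_sub, Pi.sub_apply, minDistSub_apply]
  linarith

theorem norm_sum_le_of_pairwise_disjoint {ι : Type*} {s : Finset ι} (hs : s.Nonempty)
    {e : ι → ↥(Lip0 M z)} {L : ℝ} (he : ∀ i ∈ s, ‖e i‖ ≤ L)
    (hd : (s : Set ι).Pairwise (Disjoint on fun i => support (e i : M → ℝ))) :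
    ‖∑ i ∈ s, e i‖ ≤ 2 * L := by
  have hL : 0 ≤ L := (norm_nonneg _).trans (he _ hs.choose_spec)
  have hsum : ∀ x, ((∑ i ∈ s, e i : ↥(Lip0 M z)) : M → ℝ) x = ∑ i ∈ s, (e i : M → ℝ) x := by
    simp
  refine norm_le_of_forall_sub_le (by positivity) fun x y => ?_
  obtain ⟨i, hi, hx⟩ := exists_mem_forall_ne_apply_eq_zero hs hd x
  obtain ⟨j, hj, hy⟩ := exists_mem_forall_ne_apply_eq_zero hs hd y
  rw [hsum, hsum, Finset.sum_eq_single_of_mem i hi hx, Finset.sum_eq_single_of_mem j hj hy]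
  have hix := sub_le_of_norm_le (he i hi) x y
  have hjx := sub_le_of_norm_le (he j hj) x y
  have hd0 := mul_nonneg hL (dist_nonneg (x := x) (y := y))
  rcases eq_or_ne i j with rfl | hij
  · linarith
  · linarith [hx j hj hij.symm, hy i hi hij]

end Lip0

theorem exists_abs_apply_le_of_pairwise_disjoint {ι : Type*} {s : Finset ι} (hs : s.Nonempty)
    (φ : NormedSpace.Dual ℝ ↥(Lip0 M z)) {e : ι → ↥(Lip0 M z)} {L : ℝ}
    (he : ∀ i ∈ s, ‖e i‖ ≤ L)
    (hd : (s : Set ι).Pairwise (Disjoint on fun i => support (e i : M → ℝ))) :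
    ∃ i ∈ s, |φ (e i)| ≤ 2 * L * ‖φ‖ / s.card := by
  set E := ∑ i ∈ s, (SignType.sign (φ (e i)) : ℝ) • e i
  have hE : ‖E‖ ≤ 2 * L := by
    refine Lip0.norm_sum_le_of_pairwise_disjoint hs (fun i hi => ?_) fun i hi j hj hij => ?_
    · rw [norm_smul]
      refine (mul_le_of_le_one_left (norm_nonneg _) ?_).trans (he i hi)
      rcases lt_trichotomy (φ (e i)) 0 with h | h | h <;> simp [h]
    · exact (hd hi hj hij).mono (support_const_smul_subset _ _) (support_const_smul_subset _ _)
  have hsum : ∑ i ∈ s, |φ (e i)| ≤ ∑ _i ∈ s, 2 * L * ‖φ‖ / s.card := by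
    calc ∑ i ∈ s, |φ (e i)| = φ E := by simp [E, map_sum, sign_mul_self]
      _ ≤ ‖φ‖ * ‖E‖ := (le_abs_self _).trans (φ.le_opNorm _)
      _ ≤ ‖φ‖ * (2 * L) := mul_le_mul_of_nonneg_left hE (norm_nonneg _)
      _ = ∑ _i ∈ s, 2 * L * ‖φ‖ / s.card := by
          rw [Finset.sum_const, nsmul_eq_mul]
          field_simp [hs.card_pos.ne']
  exact Finset.exists_le_of_sum_le hs hsum

def HasFarPerturbations (f : ↥(Lip0 M z)) : Prop :=
  ∀ l ε : ℝ, 0 < l → l ≤ 1 / 2 → 0 < ε → ε ≤ 1 → ∀ g : ↥(Lip0 M z), ‖g + l • f‖ ≤ 1 - l →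
    ∃ h : ℕ → ↥(Lip0 M z), (∀ k, ‖h k‖ ≤ 1) ∧
      Pairwise (Disjoint on fun k => support ((h k - g : ↥(Lip0 M z)) : M → ℝ)) ∧
      ∀ k, 2 - ε ≤ ‖f - h k‖

namespace HasFarPerturbations

variable {f : ↥(Lip0 M z)}

theorem norm_eq_one (H : HasFarPerturbations f) (hf : ‖f‖ ≤ 1) : ‖f‖ = 1 := by
  refine le_antisymm hf (le_of_forall_sub_le fun ε hε => ?_)
  obtain ⟨h, hh, -, hfar⟩ := H (1 / 2) (min ε 1) (by norm_num) le_rfl (lt_min hε one_pos)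
    (min_le_right _ _) (-((1 / 2 : ℝ) • f)) (by norm_num)
  linarith [hfar 0, norm_sub_le f (h 0), hh 0, min_le_left ε 1]

theorem isDaugavetPoint (H : HasFarPerturbations f) (hf : ‖f‖ ≤ 1) : IsDaugavetPoint f := by
  intro φ α hφ hα ε hε
  set l := min (α / 4) (1 / 2)
  have hl : 0 < l := lt_min (by positivity) (by norm_num)
  have hl2 : l ≤ 1 / 2 := min_le_right _ _
  have hlα : 4 * l ≤ α := by linarith [min_le_left (α / 4) (1 / 2)]
  obtain ⟨g₀, hg₀, hφg₀⟩ := exists_norm_le_one_lt_apply φ (r := 1 - l) (by rw [hφ]; linarith)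
  set g := (1 - l) • g₀ - l • f
  have hg : ‖g + l • f‖ ≤ 1 - l := by
    rw [sub_add_cancel, norm_smul, Real.norm_of_nonneg (by linarith)]
    exact mul_le_of_le_one_right (by linarith) hg₀
  have hφg : 1 - 3 * l < φ g := by
    have hφf : φ f ≤ 1 := (le_abs_self _).trans ((φ.le_opNorm f).trans (by rw [hφ]; linarith))
    simp only [g, map_sub, map_smul, smul_eq_mul]
    nlinarith
  obtain ⟨h, hh, hd, hfar⟩ := H l (min ε 1) hl hl2 (lt_min hε one_pos) (min_le_right _ _) g hg
  set K := ⌈4 / l⌉₊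
  have hK : (0 : ℝ) < K := by exact_mod_cast Nat.ceil_pos.2 (by positivity)
  have hKl : 4 / (K : ℝ) ≤ l := by
    rw [div_le_iff₀ hK]
    linarith [(div_le_iff₀ hl).1 (Nat.le_ceil (4 / l)), mul_comm l (K : ℝ)]
  have hgn : ‖g‖ ≤ 1 := norm_le_one_of_norm_add_smul_le hl.le hf hg
  obtain ⟨k, -, hk⟩ := exists_abs_apply_le_of_pairwise_disjoint (s := Finset.range K)
    (Finset.nonempty_range_iff.2 (by exact_mod_cast hK.ne')) φ (e := fun k => h k - g) (L := 2)
    (fun k _ => (norm_sub_le _ _).trans (by linarith [hh k])) (hd.set_pairwise _)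
  refine ⟨h k, hh k, ?_, (sub_le_sub_left (min_le_left ε 1) 2).trans (hfar k)⟩
  rw [Finset.card_range, hφ] at hk
  have : φ (h k) = φ g + φ (h k - g) := by simp
  linarith [neg_abs_le (φ (h k - g))]

end HasFarPerturbations

end PseudoMetric

variable {M : Type*} [MetricSpace M] {z : M}

theorem Lip0.le_norm_of_mul_dist_le {f : ↥(Lip0 M z)} {x y : M} (hxy : x ≠ y) {c : ℝ}
    (h : c * dist x y ≤ (f : M → ℝ) x - (f : M → ℝ) y) : c ≤ ‖f‖ :=
  le_of_mul_le_mul_right (h.trans (Lip0.sub_le_of_norm_le le_rfl x y)) (dist_pos.2 hxy)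

theorem HasFarPerturbations.exists_daugavetPoint {f : ↥(Lip0 M z)} (H : HasFarPerturbations f)
    (hf : ‖f‖ ≤ 1) : ∃ f : ↥(Lip0 M z), ‖f‖ = 1 ∧ IsDaugavetPoint f :=
  ⟨f, H.norm_eq_one hf, H.isDaugavetPoint hf⟩

section Perturbations

variable {l ε : ℝ} {g : ↥(Lip0 M z)}

theorem exists_far_perturbation_dist (hl : 0 < l) (hε : 0 < ε)
    (hg : ‖g + l • Lip0.ofLipschitzWith z (dist · z) (LipschitzWith.dist_left z)‖ ≤ 1 - l)
    {p : M} (hp : p ≠ z) :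
    ∃ h : ↥(Lip0 M z), ‖h‖ ≤ 1 ∧
      support ((h - g : ↥(Lip0 M z)) : M → ℝ) ⊆
        {x | ε * dist p z / 2 < dist x z ∧ l * dist x z < dist p z} ∧
      2 - ε ≤ ‖Lip0.ofLipschitzWith z (dist · z) (LipschitzWith.dist_left z) - h‖ := by
  set f := Lip0.ofLipschitzWith z (dist · z) (LipschitzWith.dist_left z)
  have hfx : ∀ x, (f : M → ℝ) x = dist x z := by simp [f, Lip0.ofLipschitzWith]
  have hgn : ‖g‖ ≤ 1 := norm_le_one_of_norm_add_smul_le hl.le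
    ((Lip0.norm_ofLipschitzWith_le _ _).trans_eq NNReal.coe_one) hg
  have hgle : ∀ x, (g : M → ℝ) x ≤ (1 - 2 * l) * dist x z := fun x => by
    have := Lip0.sub_le_of_norm_add_smul_le hg x z
    simp only [hfx, Lip0.coe_apply_base] at this
    linarith
  have hpz := dist_pos.2 hp
  have ha : (1 - ε) * dist p z ≤ dist z p := by
    rw [dist_comm z p]; nlinarith
  refine ⟨Lip0.minDistSub g p _ ha, Lip0.norm_minDistSub_le hgn _ _ _,
    (Lip0.support_minDistSub_sub_subset _ _ _ _).trans fun x hx => ?_, ?_⟩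
  · rw [mem_ofPred_eq] at hx
    have := mul_nonneg hl.le (dist_nonneg (x := x) (y := z))
    have := mul_pos hε hpz
    constructor <;> linarith [hgle x, dist_triangle p x z, dist_comm p x, dist_triangle x p z]
  · refine Lip0.le_norm_of_mul_dist_le hp (le_trans ?_
      (Lip0.le_sub_minDistSub_apply_sub f g ha (q := z) (by simpa using ha)))
    simp only [hfx, Lip0.coe_apply_base]
    linarith

theorem exists_far_perturbation_of_dist_le_add {F : M → ℝ} (hF : LipschitzWith 1 F)
    (hF0 : ∀ x, 0 ≤ F x) (hdist : ∀ x y, dist x y ≤ F x + F y) (hl : 0 < l) (hl2 : l ≤ 1 / 2)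
    (hε : 0 < ε) (hε1 : ε ≤ 1) (hg : ‖g + l • Lip0.ofLipschitzWith z F hF‖ ≤ 1 - l) {p q : M}
    (hp : 0 < F p) (hpz : F z = 0 ∨ 2 * F p < l * F z) (hq : F q ≤ ε * F p / 16) :
    ∃ h : ↥(Lip0 M z), ‖h‖ ≤ 1 ∧
      support ((h - g : ↥(Lip0 M z)) : M → ℝ) ⊆ {x | ε * F p / 8 < F x ∧ l * F x < F p} ∧
      2 - ε ≤ ‖Lip0.ofLipschitzWith z F hF - h‖ := by
  set f := Lip0.ofLipschitzWith z F hF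
  have hfx : ∀ x, (f : M → ℝ) x = F x - F z := fun x => rfl
  have hFle : ∀ x y, F x ≤ F y + dist x y := fun x y => by simpa using hF.le_add_mul x y
  have hgn : ‖g‖ ≤ 1 := norm_le_one_of_norm_add_smul_le hl.le
    ((Lip0.norm_ofLipschitzWith_le _ _).trans_eq NNReal.coe_one) hg
  have hgsub : ∀ x y, (g : M → ℝ) x - (g : M → ℝ) y ≤ (1 - 2 * l) * F x + F y := fun x y => by
    have := Lip0.sub_le_of_norm_add_smul_le hg x y
    rw [hfx, hfx] at this
    nlinarith [hdist x y, hF0 y]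
  have ha : (1 - ε / 2) * F p - (g : M → ℝ) q ≤ dist z p := by
    have h1 := hgsub z q
    rw [Lip0.coe_apply_base] at h1
    have := mul_nonneg hl.le (hF0 z)
    rcases hpz with hz | hz <;>
      nlinarith [hFle p z, dist_comm p z, hFle z p]
  refine ⟨Lip0.minDistSub g p _ ha, Lip0.norm_minDistSub_le hgn _ _ _,
    (Lip0.support_minDistSub_sub_subset _ _ _ _).trans fun x hx => ?_, ?_⟩
  · rw [mem_ofPred_eq] at hx
    have := mul_nonneg hl.le (hF0 x)
    have := mul_pos hε hp
    constructor <;> nlinarith [hgsub x q, hFle p x, dist_comm p x, hFle x p]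
  · have hpq : F q < F p := by nlinarith
    refine Lip0.le_norm_of_mul_dist_le (fun h => hpq.ne' (congrArg F h)) (le_trans ?_
      (Lip0.le_sub_minDistSub_apply_sub f g ha (q := q) ?_))
    · rw [hfx, hfx]
      nlinarith [hdist p q, hF0 q]
    · nlinarith [hFle p q, dist_comm p q]

theorem exists_far_perturbation_infDist {S : Set M} (hl : 0 < l) (hε : 0 < ε)
    (hg : ‖g + l • Lip0.ofLipschitzWith z (infDist · S) (lipschitz_infDist_pt S)‖ ≤ 1 - l)
    {x y : M} (hx : x ∈ S) (hxy : x ≠ y) (hy : dist x y ≤ infDist y S) {σ : ℝ}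
    (hxz : σ ≤ dist x z) (ht : dist x y ≤ l * σ / 8) :
    ∃ h : ↥(Lip0 M z), ‖h‖ ≤ 1 ∧ support ((h - g : ↥(Lip0 M z)) : M → ℝ) ⊆ ball x (σ / 4) ∧
      2 - ε ≤ ‖Lip0.ofLipschitzWith z (infDist · S) (lipschitz_infDist_pt S) - h‖ := by
  set D : M → ℝ := (infDist · S)
  set f := Lip0.ofLipschitzWith z D (lipschitz_infDist_pt S)
  have hfx : ∀ w, (f : M → ℝ) w = D w - D z := fun w => rfl
  have hD0 : ∀ w, 0 ≤ D w := fun w => infDist_nonneg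
  have hDx : D x = 0 := infDist_zero_of_mem hx
  have hgn : ‖g‖ ≤ 1 := norm_le_one_of_norm_add_smul_le hl.le
    ((Lip0.norm_ofLipschitzWith_le _ _).trans_eq NNReal.coe_one) hg
  have hgsub : ∀ w, (g : M → ℝ) w - (g : M → ℝ) x ≤ (1 - l) * dist w x - l * D w :=
    fun w => by simpa [hfx, hDx] using Lip0.sub_le_of_norm_add_smul_le hg w x
  have ht0 : 0 ≤ ε * dist x y := mul_nonneg hε.le dist_nonneg
  have ha : (1 - ε) * dist x y - (g : M → ℝ) x ≤ dist z y := by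
    have h1 := hgsub z
    rw [Lip0.coe_apply_base, dist_comm] at h1
    have := mul_le_mul_of_nonneg_left hxz hl.le
    have := mul_nonneg hl.le (hD0 z)
    linarith [dist_triangle z y x, dist_comm z x, dist_comm y x, dist_nonneg (x := x) (y := y)]
  refine ⟨Lip0.minDistSub g y _ ha, Lip0.norm_minDistSub_le hgn _ _ _,
    (Lip0.support_minDistSub_sub_subset _ _ _ _).trans fun w hw => ?_, ?_⟩
  · rw [mem_ofPred_eq] at hw
    rw [mem_ball]
    have := mul_nonneg hl.le (hD0 w)
    have : l * dist w x < l * (σ / 4) := by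
      linarith [hgsub w, dist_triangle w y x, dist_comm y x]
    exact lt_of_mul_lt_mul_left this hl.le
  · refine Lip0.le_norm_of_mul_dist_le hxy.symm (le_trans ?_
      (Lip0.le_sub_minDistSub_apply_sub f g ha (q := x) ?_))
    · rw [hfx, hfx, hDx, dist_comm]
      linarith
    · linarith

end Perturbations

theorem hasFarPerturbations_dist (hU : ∀ r : ℝ, ∃ x : M, r < dist x z) :
    HasFarPerturbations (Lip0.ofLipschitzWith z (dist · z) (LipschitzWith.dist_left z)) := by
  intro l ε hl _ hε _ g hg
  obtain ⟨u, hu0, hu⟩ := exists_seq_forall_lt_mul_of_forall_exists_gt hU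
    (ρ := l * ε / 2) (by positivity)
  choose h hh hsupp hfar using fun k => exists_far_perturbation_dist hl hε hg (dist_pos.1 (hu0 k))
  refine ⟨h, hh, (pairwise_disjoint_on _).2 fun a b hab =>
    (Set.disjoint_left.2 fun x hxa hxb => ?_).mono (hsupp a) (hsupp b), hfar⟩
  nlinarith [hxa.2, hxb.1, hu a b hab]

theorem hasFarPerturbations_of_dist_le_add {F : M → ℝ} (hF : LipschitzWith 1 F)
    (hF0 : ∀ x, 0 ≤ F x) (hdist : ∀ x y, dist x y ≤ F x + F y)
    (hc : ∀ θ > 0, ∃ x, 0 < F x ∧ F x < θ) :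
    HasFarPerturbations (Lip0.ofLipschitzWith z F hF) := by
  intro l ε hl hl2 hε hε1 g hg
  -- When `F z = 0` the base point is itself the accumulation point; otherwise the `p k` are
  -- taken much closer to it than the base point is.
  obtain ⟨p, hp, hpp⟩ : ∃ p : ℕ → M, (∀ k, 0 < F (p k) ∧ (F z = 0 ∨ 2 * F (p k) < l * F z)) ∧
      ∀ a b, a < b → F (p b) < l * ε / 16 * F (p a) := by
    rcases (hF0 z).eq_or_lt with hz | hz
    · obtain ⟨p, hp, hpp⟩ := exists_seq_forall_lt_mul_of_forall_exists_pos_lt hc one_pos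
        (ρ := l * ε / 16) (by positivity)
      exact ⟨p, fun k => ⟨(hp k).1, Or.inl hz.symm⟩, hpp⟩
    · obtain ⟨p, hp, hpp⟩ := exists_seq_forall_lt_mul_of_forall_exists_pos_lt hc
        (θ₀ := l * F z / 2) (by positivity) (ρ := l * ε / 16) (by positivity)
      exact ⟨p, fun k => ⟨(hp k).1, Or.inr (by linarith [(hp k).2])⟩, hpp⟩
  choose q _ hq using fun k => hc (ε * F (p k) / 16) (by nlinarith [(hp k).1])
  choose h hh hsupp hfar using fun k => exists_far_perturbation_of_dist_le_add hF hF0 hdist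
    hl hl2 hε hε1 hg (hp k).1 (hp k).2 (hq k).le
  refine ⟨h, hh, (pairwise_disjoint_on _).2 fun a b hab =>
    (Set.disjoint_left.2 fun x hxa hxb => ?_).mono (hsupp a) (hsupp b), hfar⟩
  nlinarith [mul_lt_mul_of_pos_left hxa.1 hl, hxb.2, hpp a b hab,
    mul_pos (mul_pos hl hε) (hp a).1]

theorem hasFarPerturbations_infDist {σ : ℝ} (hσ : 0 < σ) {xs ys : ℕ → M}
    (hsep : Pairwise fun m n => σ ≤ dist (xs m) (xs n)) (hz : ∀ n, σ ≤ dist (xs n) z)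
    (hne : ∀ n, xs n ≠ ys n) (hlim : Tendsto (fun n => dist (xs n) (ys n)) atTop (𝓝 0)) :
    HasFarPerturbations (Lip0.ofLipschitzWith z (infDist · (range xs))
      (lipschitz_infDist_pt _)) := by
  intro l ε hl hl2 hε _ g hg
  obtain ⟨N, hN⟩ := eventually_atTop.1
    (hlim.eventually (eventually_le_nhds (show (0 : ℝ) < l * σ / 8 by positivity)))
  have ht : ∀ k, dist (xs (N + k)) (ys (N + k)) ≤ l * σ / 8 :=
    fun k => hN _ (Nat.le_add_right _ _)
  have hy : ∀ k, dist (xs (N + k)) (ys (N + k)) ≤ infDist (ys (N + k)) (range xs) := fun k =>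
    (le_infDist ⟨_, mem_range_self 0⟩).2 <| by
      rintro - ⟨m, rfl⟩
      rcases eq_or_ne m (N + k) with rfl | hm
      · exact (dist_comm _ _).le
      · linarith [hsep hm.symm, dist_triangle (xs (N + k)) (ys (N + k)) (xs m), ht k,
          mul_le_of_le_one_left hσ.le (by linarith : l ≤ 1)]
  choose h hh hsupp hfar using fun k => exists_far_perturbation_infDist hl hε hg
    (mem_range_self (N + k)) (hne (N + k)) (hy k) (hz (N + k)) (ht k)
  refine ⟨h, hh, fun a b hab => (Set.disjoint_left.2 fun x hxa hxb => ?_).mono (hsupp a)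
    (hsupp b), hfar⟩
  rw [mem_ball] at hxa hxb
  linarith [hsep (show N + a ≠ N + b by omega), dist_triangle_left (xs (N + a)) (xs (N + b)) x]

theorem exists_daugavetPoint_of_not_isBounded (hM : ¬ Bornology.IsBounded (univ : Set M)) :
    ∃ f : ↥(Lip0 M z), ‖f‖ = 1 ∧ IsDaugavetPoint f := by
  have hU : ∀ r, ∃ x : M, r < dist x z := fun r => not_forall_not.1 fun h =>
    hM ((isBounded_iff_subset_closedBall z).2 ⟨r, fun x _ => mem_closedBall.2 (not_lt.1 (h x))⟩)
  exact (hasFarPerturbations_dist hU).exists_daugavetPoint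
    ((Lip0.norm_ofLipschitzWith_le _ _).trans_eq NNReal.coe_one)

theorem exists_dist_completion_pos_lt {a b : ℕ → M} (hab : ∀ n, a n ≠ b n)
    (hlim : Tendsto (fun n => dist (a n) (b n)) atTop (𝓝 0)) (ha : TotallyBounded (range a)) :
    ∃ c : Completion M, ∀ θ > 0, ∃ x : M, 0 < dist (x : Completion M) c ∧
      dist (x : Completion M) c < θ := by
  have hK : IsCompact (closure ((↑) '' range a : Set (Completion M))) :=
    (totallyBounded_closure.2 (ha.image (Completion.uniformContinuous_coe M))).isCompact_of_isClosed
      isClosed_closure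
  obtain ⟨c, -, φ, hφ, hc⟩ := hK.tendsto_subseq (x := fun n => (a n : Completion M))
    fun n => subset_closure ⟨a n, mem_range_self n, rfl⟩
  refine ⟨c, fun θ hθ => ?_⟩
  obtain ⟨n, hn₁, hn₂⟩ := ((Metric.tendsto_nhds.1 hc (θ / 2) (half_pos hθ)).and
    ((hlim.comp hφ.tendsto_atTop).eventually (eventually_lt_nhds (half_pos hθ)))).exists
  simp only [comp_apply] at hn₁ hn₂
  by_cases hac : (a (φ n) : Completion M) = c
  · refine ⟨b (φ n), ?_, ?_⟩ <;>
      rw [← hac, Completion.dist_eq, dist_comm]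
    · exact dist_pos.2 (hab _)
    · linarith
  · exact ⟨a (φ n), dist_pos.2 hac, by linarith⟩

theorem exists_daugavetPoint_of_not_uniformlyDiscrete (hM : ¬ UniformlyDiscrete M) :
    ∃ f : ↥(Lip0 M z), ‖f‖ = 1 ∧ IsDaugavetPoint f := by
  obtain ⟨a, b, hab, hlim⟩ : ∃ a b : ℕ → M, (∀ n, a n ≠ b n) ∧
      Tendsto (fun n => dist (a n) (b n)) atTop (𝓝 0) := by
    have : ∀ n : ℕ, ∃ x y : M, x ≠ y ∧ dist x y < 1 / (n + 1) := fun n => by_contra fun hn =>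
      hM ⟨1 / (n + 1), by positivity, fun x y hxy => not_lt.1 fun hlt => hn ⟨x, y, hxy, hlt⟩⟩
    choose a b hab hd using this
    exact ⟨a, b, hab, squeeze_zero (fun n => dist_nonneg) (fun n => (hd n).le)
      tendsto_one_div_add_atTop_nhds_zero_nat⟩
  by_cases ha : TotallyBounded (range a)
  · obtain ⟨c, hc⟩ := exists_dist_completion_pos_lt hab hlim ha
    have hF : LipschitzWith 1 fun x : M => dist (x : Completion M) c :=
      LipschitzWith.of_le_add fun x y => by
        rw [← Completion.dist_eq x y]
        linarith [dist_triangle (x : Completion M) y c]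
    refine (hasFarPerturbations_of_dist_le_add hF (fun _ => dist_nonneg) (fun x y => ?_)
      hc).exists_daugavetPoint ((Lip0.norm_ofLipschitzWith_le _ _).trans_eq NNReal.coe_one)
    rw [← Completion.dist_eq]
    exact dist_triangle_right _ _ _
  · obtain ⟨σ, hσ, φ, hφ, hsep, hz⟩ := exists_separated_subseq ha z
    exact (hasFarPerturbations_infDist hσ hsep hz (fun n => hab (φ n))
      (hlim.comp hφ)).exists_daugavetPoint
      ((Lip0.norm_ofLipschitzWith_le _ _).trans_eq NNReal.coe_one)

end DeltaPaper

/-- Corollary 5.2. If `M` is unbounded or not uniformly discrete, then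
`Lip₀(M)` contains a Daugavet-point. -/
theorem statement16 {M : Type*} [MetricSpace M] (z : M)
    (h : ¬ Bornology.IsBounded (Set.univ : Set M) ∨ ¬ UniformlyDiscrete M) :
    ∃ f : ↥(Lip0 M z), ‖f‖ = 1 ∧ IsDaugavetPoint f :=
  h.elim exists_daugavetPoint_of_not_isBounded exists_daugavetPoint_of_not_uniformlyDiscrete
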